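/- Let G be a finite directed graph with an edge-cost function w : E → ℝ, and define the bottleneck cost of a path as the maximum edge cost along it. If t is reachable from s in G, then a Dijkstra-style algorithm that repeatedly extracts the unvisited vertex of minimum cost-to-come c(v), and relaxes each out-edge (v,x) via c_new = max(c(v), w(v,x)), computes at termination the minimum bottleneck cost of any path from s to t. -/

import Mathlib

open Classical

variable {V : Type*}

/-- Bottleneck cost of the directed path `s :: l` (maximum edge cost; `⊥` if `l = []`). -/
noncomputable def bcost (w : V → V → ℝ) (s : V) (l : List V) : WithBot ℝ :=
  (((s :: l).zip l).map fun p => w p.1 p.2).maximum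

/-- `l` is (the vertex list, excluding `s`, of) a directed path from `s` to `t`. -/
def IsPathTo (adj : V → V → Prop) (s t : V) (l : List V) : Prop :=
  l ≠ [] ∧ List.Chain adj s l ∧ l.getLast? = some t

/-- One relaxation: improve the cost-to-come of `x` via the out-edge `(z, x)` using
`c_new = max (c z) (w z x)`. -/
noncomputable def relax (adj : V → V → Prop) (w : V → V → ℝ)
    (c : V → WithTop ℝ) (z x : V) : WithTop ℝ :=
  if adj z x then min (c x) (max (c z) ((w z x : ℝ) : WithTop ℝ)) else c x

/-- Dijkstra-style loop: repeatedly extract an unvisited vertex of minimum cost-to-come and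
relax its out-edges towards the remaining unvisited vertices. -/
noncomputable def dijkstraRun [DecidableEq V] (adj : V → V → Prop) (w : V → V → ℝ) :
    Finset V → (V → WithTop ℝ) → (V → WithTop ℝ) := fun U c =>
  if h : ∃ z ∈ U, ∀ x ∈ U, c z ≤ c x then
    let z := h.choose
    dijkstraRun adj w (U.erase z)
      (fun x => if x ∈ U.erase z then relax adj w c z x else c x)
  else c
termination_by U => U.card
decreasing_by
  exact Finset.card_erase_lt_of_mem h.choose_spec.1

/-!
Dijkstra's argument only uses that the bottleneck cost `max` is monotone and never decreases
along a walk. Once a vertex leaves the unvisited set its label is final and no larger than the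
cost of any walk to it: a walk from `s` to the extracted vertex `z` must enter the unvisited set
through some edge `(y, x)` with `y` already settled, so by relaxation
`c z ≤ c x ≤ max (c y) (w y x)`, which is at most the cost of the walk. Every finite label is,
conversely, the cost of an actual walk, so at termination the label of `t` is a least cost.
-/

/-- `IsWalkCost adj w u v r`: some walk from `u` to `v` has bottleneck cost `r`, the empty walk
costing `0` (the label the algorithm gives its source). -/
inductive IsWalkCost (adj : V → V → Prop) (w : V → V → ℝ) : V → V → ℝ → Prop
  | nil (u : V) : IsWalkCost adj w u u 0
  | cons {u x v : V} {r : ℝ} : adj u x → IsWalkCost adj w x v r →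
      IsWalkCost adj w u v (max (w u x) r)

namespace IsWalkCost

variable {adj : V → V → Prop} {w : V → V → ℝ} {u v : V} {r : ℝ}

theorem nonneg (h : IsWalkCost adj w u v r) : 0 ≤ r := by
  induction h with
  | nil => exact le_rfl
  | cons _ _ ih => exact le_max_of_le_right ih

theorem snoc {x : V} (h : IsWalkCost adj w u v r) (hvx : adj v x) :
    IsWalkCost adj w u x (max r (w v x)) := by
  induction h with
  | nil u => simpa only [max_comm] using cons hvx (nil x)
  | cons hux _ ih => simpa only [max_assoc] using cons hux (ih hvx)

theorem exists_crossing_edge {S : Set V} (h : IsWalkCost adj w u v r) (hu : u ∈ S)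
    (hv : v ∉ S) :
    ∃ y x r', y ∈ S ∧ x ∉ S ∧ adj y x ∧ IsWalkCost adj w u y r' ∧ r' ≤ r ∧ w y x ≤ r := by
  induction h with
  | nil => exact absurd hu hv
  | @cons u x v r hux hxv ih =>
    by_cases hx : x ∈ S
    · obtain ⟨y, x', r', hy, hx', hyx', hwalk, hr', hwr⟩ := ih hx hv
      exact ⟨y, x', _, hy, hx', hyx', cons hux hwalk, max_le_max le_rfl hr',
        le_max_of_le_right hwr⟩
    · exact ⟨u, x, 0, hu, hx, hux, nil u, le_max_of_le_right hxv.nonneg, le_max_left _ _⟩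

end IsWalkCost

section Paths

variable {adj : V → V → Prop} {w : V → V → ℝ}

theorem bcost_cons (s x : V) (l : List V) :
    bcost w s (x :: l) = max ↑(w s x) (bcost w x l) := by
  simp [bcost, List.maximum_cons]

theorem bcost_nonneg (hw : ∀ u v, 0 ≤ w u v) {s : V} {l : List V} (hl : l ≠ []) :
    0 ≤ bcost w s l := by
  obtain ⟨x, l, rfl⟩ := List.exists_cons_of_ne_nil hl
  rw [bcost_cons]
  exact le_max_of_le_left (WithBot.coe_nonneg.2 (hw s x))

theorem IsWalkCost.of_isChain :
    ∀ {u v : V} {l : List V}, List.IsChain adj (u :: l) → (u :: l).getLast? = some v →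
      ∃ r, IsWalkCost adj w u v r ∧ max (bcost w u l) 0 = r
  | u, v, [], _, hlast => by
    obtain rfl : u = v := by simpa using hlast
    exact ⟨0, .nil u, by simp [bcost]⟩
  | u, v, x :: l, hchain, hlast => by
    rw [List.isChain_cons_cons] at hchain
    rw [List.getLast?_cons_cons] at hlast
    obtain ⟨r, hr, hcost⟩ := of_isChain hchain.2 hlast
    refine ⟨_, .cons hchain.1 hr, ?_⟩
    rw [bcost_cons, max_assoc, hcost, WithBot.coe_max]

theorem IsWalkCost.exists_isChain {u v : V} {r : ℝ} (h : IsWalkCost adj w u v r) :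
    ∃ l, List.IsChain adj (u :: l) ∧ (u :: l).getLast? = some v ∧ max (bcost w u l) 0 = r := by
  induction h with
  | nil u => exact ⟨[], .singleton u, rfl, by simp [bcost]⟩
  | @cons u x v r hux _ ih =>
    obtain ⟨l, hchain, hlast, hcost⟩ := ih
    refine ⟨x :: l, List.isChain_cons_cons.2 ⟨hux, hchain⟩, ?_, ?_⟩
    · rwa [List.getLast?_cons_cons]
    · rw [bcost_cons, max_assoc, hcost, WithBot.coe_max]

theorem isPathTo_iff {s t : V} {l : List V} (hst : s ≠ t) :
    IsPathTo adj s t l ↔ List.IsChain adj (s :: l) ∧ (s :: l).getLast? = some t := by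
  cases l with
  | nil => simpa [IsPathTo] using hst
  | cons x l => rw [List.getLast?_cons_cons]; exact and_iff_right (List.cons_ne_nil x l)

theorem setOf_bcost_eq_setOf_isWalkCost (hw : ∀ u v, 0 ≤ w u v) {s t : V} (hst : s ≠ t) :
    {x : ℝ | ∃ l, IsPathTo adj s t l ∧ bcost w s l = x} = {r | IsWalkCost adj w s t r} := by
  ext x
  constructor
  · rintro ⟨l, hl, hx⟩
    obtain ⟨hchain, hlast⟩ := (isPathTo_iff hst).1 hl
    obtain ⟨r, hr, hcost⟩ := IsWalkCost.of_isChain (w := w) hchain hlast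
    rw [max_eq_left (bcost_nonneg hw hl.1), hx, WithBot.coe_inj] at hcost
    rwa [← hcost] at hr
  · intro hx
    obtain ⟨l, hchain, hlast, hcost⟩ := hx.exists_isChain
    have hl : IsPathTo adj s t l := (isPathTo_iff hst).2 ⟨hchain, hlast⟩
    exact ⟨l, hl, by rwa [max_eq_left (bcost_nonneg hw hl.1)] at hcost⟩

end Paths

section Relax

variable {adj : V → V → Prop} {w : V → V → ℝ} {c : V → WithTop ℝ} {z x : V}

theorem relax_le : relax adj w c z x ≤ c x := by
  unfold relax
  split_ifs
  exacts [min_le_left _ _, le_rfl]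

theorem relax_le_max (h : adj z x) : relax adj w c z x ≤ max (c z) (w z x) := by
  rw [relax, if_pos h]
  exact min_le_right _ _

theorem relax_eq_or :
    relax adj w c z x = c x ∨ adj z x ∧ relax adj w c z x = max (c z) (w z x) := by
  unfold relax
  split_ifs with h
  · exact (min_choice _ _).imp_right (⟨h, ·⟩)
  · exact .inl rfl

end Relax

structure DijkstraInvariant (adj : V → V → Prop) (w : V → V → ℝ) (s : V) (U : Finset V)
    (c : V → WithTop ℝ) : Prop where
  source_le : c s ≤ 0
  realized : ∀ v, c v ≠ ⊤ → ∃ r, IsWalkCost adj w s v r ∧ c v = r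
  settled_le : ∀ v ∉ U, ∀ r, IsWalkCost adj w s v r → c v ≤ r
  frontier_le : ∀ y ∉ U, ∀ x ∈ U, adj y x → c x ≤ max (c y) (w y x)

namespace DijkstraInvariant

variable {adj : V → V → Prop} {w : V → V → ℝ} {s : V} {U : Finset V} {c : V → WithTop ℝ}

theorem exists_le_of_isWalkCost (h : DijkstraInvariant adj w s U c) {v : V} {r : ℝ}
    (hv : v ∈ U) (hr : IsWalkCost adj w s v r) : ∃ x ∈ U, c x ≤ r := by
  by_cases hs : s ∈ U
  · exact ⟨s, hs, h.source_le.trans (WithTop.coe_nonneg.2 hr.nonneg)⟩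
  obtain ⟨y, x, r', hy, hx, hyx, hr', hr'r, hwr⟩ :=
    hr.exists_crossing_edge (S := (↑U : Set V)ᶜ) hs (by simpa using hv)
  refine ⟨x, by simpa using hx, ?_⟩
  calc c x ≤ max (c y) (w y x) := h.frontier_le y hy x (by simpa using hx) hyx
    _ ≤ max (r : WithTop ℝ) r :=
      max_le_max ((h.settled_le y hy r' hr').trans (WithTop.coe_le_coe.2 hr'r))
        (WithTop.coe_le_coe.2 hwr)
    _ = r := max_self _

theorem settle [DecidableEq V] (h : DijkstraInvariant adj w s U c) {z : V} (hz : z ∈ U)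
    (hmin : ∀ x ∈ U, c z ≤ c x) :
    DijkstraInvariant adj w s (U.erase z)
      (fun x => if x ∈ U.erase z then relax adj w c z x else c x) := by
  have hz_le : ∀ r, IsWalkCost adj w s z r → c z ≤ r := fun r hr => by
    obtain ⟨x, hx, hxr⟩ := h.exists_le_of_isWalkCost hz hr
    exact (hmin x hx).trans hxr
  constructor
  · refine le_trans ?_ h.source_le
    split_ifs
    exacts [relax_le, le_rfl]
  · intro v hv
    split_ifs at hv ⊢ with hvU
    · rcases relax_eq_or (adj := adj) (w := w) (c := c) (z := z) (x := v)
        with hrel | ⟨hzv, hrel⟩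
      · rw [hrel] at hv ⊢
        exact h.realized v hv
      · rw [hrel] at hv ⊢
        obtain ⟨r, hr, hcz⟩ := h.realized z (ne_top_of_le_ne_top hv (le_max_left _ _))
        exact ⟨_, hr.snoc hzv, by rw [hcz, WithTop.coe_max]⟩
    · exact h.realized v hv
  · intro v hv r hr
    rw [if_neg hv]
    obtain rfl | hvU : v = z ∨ v ∉ U := by
      simpa only [Finset.mem_erase, not_and_or, not_not] using hv
    exacts [hz_le r hr, h.settled_le v hvU r hr]
  · intro y hy x hx hyx
    rw [if_neg hy, if_pos hx]
    obtain rfl | hyU : y = z ∨ y ∉ U := by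
      simpa only [Finset.mem_erase, not_and_or, not_not] using hy
    exacts [relax_le_max hyx,
      relax_le.trans (h.frontier_le y hyU x (Finset.mem_of_mem_erase hx) hyx)]

theorem dijkstraRun [DecidableEq V] (h : DijkstraInvariant adj w s U c) :
    DijkstraInvariant adj w s ∅ (dijkstraRun adj w U c) := by
  fun_induction _root_.dijkstraRun adj w U c with
  | case1 U c hmin _ ih =>
    obtain ⟨hz, hzmin⟩ := hmin.choose_spec
    exact ih (h.settle hz hzmin)
  | case2 U c hmin =>
    obtain rfl : U = ∅ := by
      by_contra hU
      exact hmin (U.exists_min_image c (Finset.nonempty_iff_ne_empty.2 hU))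
    exact h

theorem isLeast (h : DijkstraInvariant adj w s ∅ c) {v : V} {r : ℝ}
    (hr : IsWalkCost adj w s v r) : ∃ m, IsLeast {r' | IsWalkCost adj w s v r'} m ∧ c v = m := by
  have hle := h.settled_le v (Finset.notMem_empty v)
  obtain ⟨m, hm, hcv⟩ := h.realized v (ne_top_of_le_ne_top WithTop.coe_ne_top (hle r hr))
  exact ⟨m, ⟨hm, fun r' hr' => WithTop.coe_le_coe.1 (hcv ▸ hle r' hr')⟩, hcv⟩

end DijkstraInvariant

theorem dijkstraInvariant_init [Fintype V] [DecidableEq V] (adj : V → V → Prop)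
    (w : V → V → ℝ) (s : V) :
    DijkstraInvariant adj w s Finset.univ (fun v => if v = s then (0 : WithTop ℝ) else ⊤) where
  source_le := by simp
  realized v hv := by
    obtain rfl : v = s := by simpa using hv
    exact ⟨0, .nil v, by simp⟩
  settled_le v hv := absurd (Finset.mem_univ v) hv
  frontier_le y hy := absurd (Finset.mem_univ y) hy

/-- Correctness of bottleneck Dijkstra: on a finite directed graph with nonnegative edge costs,
starting from cost-to-come `0` at `s` and `∞` elsewhere, the algorithm computes at `t` the
minimum bottleneck cost over all directed paths from `s` to `t`, provided `t ≠ s` is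
reachable from `s`. -/
theorem dijkstra_bottleneck_correct [Fintype V] [DecidableEq V]
    (adj : V → V → Prop) (w : V → V → ℝ) (hw : ∀ u v, 0 ≤ w u v)
    (s t : V) (hst : s ≠ t) (hreach : ∃ l, IsPathTo adj s t l) :
    ∃ m : ℝ,
      IsLeast {x : ℝ | ∃ l, IsPathTo adj s t l ∧ bcost w s l = (x : WithBot ℝ)} m ∧
      dijkstraRun adj w Finset.univ (fun v => if v = s then (0 : WithTop ℝ) else ⊤) t
        = ((m : ℝ) : WithTop ℝ) := by
  obtain ⟨l, hl⟩ := hreach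
  obtain ⟨hchain, hlast⟩ := (isPathTo_iff hst).1 hl
  obtain ⟨r, hr, -⟩ := IsWalkCost.of_isChain (w := w) hchain hlast
  obtain ⟨m, hm, hc⟩ := (dijkstraInvariant_init adj w s).dijkstraRun.isLeast hr
  exact ⟨m, setOf_bcost_eq_setOf_isWalkCost hw hst ▸ hm, hc⟩
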